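/- If there exists (ρ̂, F̂) ∈ 𝒞_{N,𝒯} with B_{N,𝒯}(ρ̂, F̂) < +∞, then the infimum of B_{N,𝒯} over 𝒞_{N,𝒯} is attained, i.e. there exists (ρ*, F*) ∈ 𝒞_{N,𝒯} with B_{N,𝒯}(ρ*, F*) = inf{B_{N,𝒯}(ρ,F) : (ρ,F) ∈ 𝒞_{N,𝒯}} < +∞. -/

import Mathlib

open scoped BigOperators ENNReal RealInnerProductSpace
open Finset

namespace OTFV

/-- The Benamou–Brenier action density for a scalar flux value. -/
noncomputable def Bact (p q : ℝ) : ℝ≥0∞ :=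
  if 0 < p then ENNReal.ofReal (q ^ 2 / (2 * p))
  else if p = 0 ∧ q = 0 then 0 else ⊤

/-- Combinatorial/metric data of an admissible TPFA mesh: cells `T`, internal
edges `E`; an edge `σ` joins the two distinct cells `e1 σ` and `e2 σ`. -/
structure Mesh (T E : Type*) where
  e1 : E → T
  e2 : E → T
  ne : ∀ σ, e1 σ ≠ e2 σ
  m : T → ℝ
  m_pos : ∀ K, 0 < m K
  mS : E → ℝ
  mS_pos : ∀ σ, 0 < mS σ
  dS : E → ℝ
  dS_pos : ∀ σ, 0 < dS σ
  d1 : E → ℝ   -- d_{K,σ} for K = e1 σ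
  d2 : E → ℝ   -- d_{L,σ} for L = e2 σ
  d1_pos : ∀ σ, 0 < d1 σ
  d2_pos : ∀ σ, 0 < d2 σ
  d_sum : ∀ σ, d1 σ + d2 σ = dS σ

variable {T T' E : Type*}

/-- A conservative flux is encoded by its value `F σ = F_{K,σ}` on the side `K = e1 σ`
(so that `F_{L,σ} = -F σ` for `L = e2 σ`).  Discrete divergence. -/
noncomputable def divT [Fintype E] [DecidableEq T] (M : Mesh T E) (F : E → ℝ) (K : T) : ℝ :=
  (∑ σ, ((if M.e1 σ = K then F σ else 0) + (if M.e2 σ = K then -F σ else 0)) * M.mS σ) / M.m K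

/-- Discrete gradient, oriented from `e1 σ` to `e2 σ` (the `(K,σ)` component, `K = e1 σ`). -/
noncomputable def gradS (M : Mesh T E) (a : T → ℝ) (σ : E) : ℝ :=
  (a (M.e2 σ) - a (M.e1 σ)) / M.dS σ

/-- Linear (weighted arithmetic mean) reconstruction on edges. -/
noncomputable def linRec (M : Mesh T E) (a : T → ℝ) (σ : E) : ℝ :=
  (M.d1 σ / M.dS σ) * a (M.e1 σ) + (M.d2 σ / M.dS σ) * a (M.e2 σ)

/-- Injection from coarse densities to fine densities, `p` maps a fine cell to its coarse cell. -/
def inj (p : T → T') (ρ : T' → ℝ) : T → ℝ := fun K => ρ (p K)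

/-- Mass of a coarse cell. -/
noncomputable def coarseM [Fintype T] [DecidableEq T'] (M : Mesh T E) (p : T → T') (K' : T') : ℝ :=
  ∑ K ∈ Finset.univ.filter (fun K => p K = K'), M.m K

/-- Adjoint of the injection. -/
noncomputable def injAdj [Fintype T] [DecidableEq T'] (M : Mesh T E) (p : T → T')
    (a : T → ℝ) (K' : T') : ℝ :=
  (∑ K ∈ Finset.univ.filter (fun K => p K = K'), a K * M.m K) / coarseM M p K'

/-- Adjoint of the linear reconstruction, `(L_Σ^* u)_K = Σ_{σ∈Σ_K} u_σ m_σ d_{K,σ}/m_K`. -/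
noncomputable def linRecAdj [Fintype E] [DecidableEq T] (M : Mesh T E) (u : E → ℝ) (K : T) : ℝ :=
  (∑ σ, ((if M.e1 σ = K then u σ * M.mS σ * M.d1 σ else 0) +
          (if M.e2 σ = K then u σ * M.mS σ * M.d2 σ else 0))) / M.m K

/-- `R_{𝒯'} = 𝕀^* ∘ L_Σ^*`. -/
noncomputable def coarseRec [Fintype T] [Fintype E] [DecidableEq T] [DecidableEq T']
    (M : Mesh T E) (p : T → T') (u : E → ℝ) (K' : T') : ℝ :=
  injAdj M p (linRecAdj M u) K'

/-- Weighted scalar product on the coarse space. -/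
noncomputable def iprodC [Fintype T] [Fintype T'] [DecidableEq T'] (M : Mesh T E) (p : T → T')
    (a b : T' → ℝ) : ℝ :=
  ∑ K', a K' * b K' * coarseM M p K'

/-- The discrete Benamou–Brenier functional `B_{N,𝒯}`; the time step is `τ = 1/(N+1)`,
`ρ k.succ` stands for `ρ^k` and `ρ k.castSucc` for `ρ^{k-1}`, `k = 1, …, N+1`. -/
noncomputable def Benergy [Fintype E] [Fintype T'] (M : Mesh T E) (p : T → T') (N : ℕ)
    (ρ : Fin (N+2) → T' → ℝ) (F : Fin (N+1) → E → ℝ) : ℝ≥0∞ :=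
  if ∀ k K', 0 ≤ ρ k K' then
    ∑ k : Fin (N+1),
      ENNReal.ofReal ((1:ℝ)/(N+1)) *
        ∑ σ, Bact (linRec M (inj p (fun K' => (ρ k.succ K' + ρ k.castSucc K') / 2)) σ) (F k σ) *
          ENNReal.ofReal (M.mS σ * M.dS σ)
  else ⊤

/-- The discrete continuity equation. -/
def ContEq [Fintype E] [DecidableEq T] (M : Mesh T E) (p : T → T') (N : ℕ)
    (ρ : Fin (N+2) → T' → ℝ) (F : Fin (N+1) → E → ℝ) : Prop :=
  ∀ (k : Fin (N+1)) (K : T),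
    (ρ k.succ (p K) - ρ k.castSucc (p K)) / ((1:ℝ)/(N+1)) + divT M (F k) K = 0

/-- The constraint set `𝒞_{N,𝒯}`. -/
def Cset [Fintype E] [DecidableEq T] (M : Mesh T E) (p : T → T') (N : ℕ)
    (ρin ρf : T' → ℝ) : Set ((Fin (N+2) → T' → ℝ) × (Fin (N+1) → E → ℝ)) :=
  {x | x.1 0 = ρin ∧ x.1 (Fin.last (N+1)) = ρf ∧ ContEq M p N x.1 x.2}

/-- The (halved, squared) discrete Wasserstein distance: `W² = 2 inf B`. -/
noncomputable def Wdist2 [Fintype E] [Fintype T'] [DecidableEq T] (M : Mesh T E) (p : T → T')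
    (N : ℕ) (ρin ρf : T' → ℝ) : ℝ≥0∞ :=
  2 * ⨅ (x : (Fin (N+2) → T' → ℝ) × (Fin (N+1) → E → ℝ)) (_ : x ∈ Cset M p N ρin ρf),
    Benergy M p N x.1 x.2

/-- Logarithmic barrier. -/
noncomputable def Jlog (x : ℝ) : EReal := if 0 < x then ((- Real.log x : ℝ) : EReal) else ⊤

/-- The barrier functional `J_{N,𝒯}` (only the interior times `k = 1, …, N`). -/
noncomputable def Jbar [Fintype T] [Fintype T'] [DecidableEq T'] (M : Mesh T E) (p : T → T')
    (N : ℕ) (ρ : Fin (N+2) → T' → ℝ) : EReal :=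
  ∑ k : Fin N, (((1:ℝ)/(N+1) : ℝ) : EReal) *
    ∑ K', Jlog (ρ (k.succ.castSucc) K') * ((coarseM M p K' : ℝ) : EReal)

/-- Perturbed objective `B_{N,𝒯} + μ J_{N,𝒯}`, with values in `EReal`. -/
noncomputable def Pobj [Fintype T] [Fintype T'] [Fintype E] [DecidableEq T'] (M : Mesh T E)
    (p : T → T') (N : ℕ) (μ : ℝ) (ρ : Fin (N+2) → T' → ℝ) (F : Fin (N+1) → E → ℝ) : EReal :=
  (Benergy M p N ρ F : EReal) + (μ : EReal) * Jbar M p N ρ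

/-- Connectivity of the graph of cells induced by the internal edges. -/
def MeshConnected (M : Mesh T E) : Prop :=
  ∀ K L : T, Relation.ReflTransGen
    (fun a b => ∃ σ, (M.e1 σ = a ∧ M.e2 σ = b) ∨ (M.e1 σ = b ∧ M.e2 σ = a)) K L

end OTFV

open OTFV

/-!
The energy is lower semicontinuous, since the sublevel sets of `Bact` are the closed sets
`{(p, q) | 0 ≤ p ∧ q ^ 2 ≤ 2 r p}`, and the constraint set is closed. Its sublevel sets need not be
bounded, because the continuity equation does not see the densities at coarse cells outside the
range of `p`; overwriting those by the values of the finite-energy competitor changes neither the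
energy nor the constraints. For the modified curves, mass conservation bounds the densities, and
then finite energy bounds the fluxes, so the minimisation takes place on a compact set.
-/

theorem exists_isMinOn_of_forall_exists_le {X α : Type*} [TopologicalSpace X] [LinearOrder α]
    {f : X → α} (hf : LowerSemicontinuous f) {s K : Set X} (hs : IsClosed s)
    (hK : IsCompact K) {x₀ : X} (hx₀ : x₀ ∈ s)
    (h : ∀ x ∈ s, f x ≤ f x₀ → ∃ y ∈ s ∩ K, f y ≤ f x) :
    ∃ x ∈ s, IsMinOn f s x := by
  obtain ⟨y₀, hy₀, hy₀x₀⟩ := h x₀ hx₀ le_rfl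
  obtain ⟨x, hx, hmin⟩ :=
    LowerSemicontinuousOn.exists_isMinOn ⟨y₀, hy₀⟩ (hK.inter_left hs) (hf.lowerSemicontinuousOn _)
  refine ⟨x, hx.1, fun y hy => ?_⟩
  rcases le_total (f y) (f x₀) with hyx₀ | hx₀y
  · obtain ⟨z, hz, hzy⟩ := h y hy hyx₀
    exact (hmin hz).trans hzy
  · exact (hmin hy₀).trans (hy₀x₀.trans hx₀y)

theorem LowerSemicontinuous.ite_top {X : Type*} [TopologicalSpace X] {P : X → Prop}
    [DecidablePred P] (hP : IsClosed {x | P x}) {g : X → ℝ≥0∞} (hg : LowerSemicontinuous g) :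
    LowerSemicontinuous fun x => if P x then g x else ⊤ := by
  intro x y hy
  dsimp only at hy ⊢
  by_cases hx : P x
  · rw [if_pos hx] at hy
    filter_upwards [hg x y hy] with x' hx'
    split_ifs
    · exact hx'
    · exact hx'.trans_le le_top
  · rw [if_neg hx] at hy
    filter_upwards [hP.isOpen_compl.mem_nhds hx] with x' (hx' : ¬P x')
    rwa [if_neg hx']

theorem norm_le_sum_sqrt_of_forall_sq_mul_le {ι κ : Type*} [Fintype ι] [Fintype κ]
    {F : ι → κ → ℝ} {c : κ → ℝ} (hc : ∀ σ, 0 < c σ) {D : ℝ}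
    (hF : ∀ k σ, F k σ ^ 2 * c σ ≤ D) : ‖F‖ ≤ ∑ σ, √(D / c σ) := by
  have hsum : 0 ≤ ∑ σ, √(D / c σ) := Finset.sum_nonneg fun _ _ => Real.sqrt_nonneg _
  refine (pi_norm_le_iff_of_nonneg hsum).2 fun k => (pi_norm_le_iff_of_nonneg hsum).2 fun σ => ?_
  calc ‖F k σ‖ ≤ √(D / c σ) := by
        rw [Real.norm_eq_abs]
        exact Real.abs_le_sqrt ((le_div_iff₀ (hc σ)).2 (hF k σ))
    _ ≤ ∑ σ, √(D / c σ) := Finset.single_le_sum (f := fun σ => √(D / c σ))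
        (fun _ _ => Real.sqrt_nonneg _) (Finset.mem_univ σ)

namespace OTFV

theorem Bact_le_ofReal_iff {p q r : ℝ} (hr : 0 ≤ r) :
    Bact p q ≤ ENNReal.ofReal r ↔ 0 ≤ p ∧ q ^ 2 ≤ 2 * r * p := by
  unfold Bact
  rcases lt_trichotomy p 0 with hp | rfl | hp
  · simp [hp.not_gt, hp.ne, hp.not_ge]
  · by_cases hq : q = 0 <;> simp [hq]
  · rw [if_pos hp, ENNReal.ofReal_le_ofReal_iff hr, div_le_iff₀ (by positivity)]
    constructor
    · intro h; exact ⟨hp.le, by linarith⟩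
    · intro h; linarith [h.2]

theorem sq_le_two_mul_toReal_Bact_mul {p q : ℝ} (h : Bact p q ≠ ⊤) :
    q ^ 2 ≤ 2 * (Bact p q).toReal * p :=
  ((Bact_le_ofReal_iff ENNReal.toReal_nonneg).1 (ENNReal.ofReal_toReal h).ge).2

theorem lowerSemicontinuous_Bact : LowerSemicontinuous fun x : ℝ × ℝ => Bact x.1 x.2 := by
  refine lowerSemicontinuous_iff_isClosed_preimage.2 fun y => ?_
  rcases eq_or_ne y ⊤ with rfl | hy
  · simp
  · have : (fun x : ℝ × ℝ => Bact x.1 x.2) ⁻¹' Set.Iic y =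
        {x | 0 ≤ x.1} ∩ {x | x.2 ^ 2 ≤ 2 * y.toReal * x.1} := by
      ext x
      simp only [Set.mem_preimage, Set.mem_Iic, Set.mem_inter_iff, Set.mem_ofPred_eq]
      rw [← Bact_le_ofReal_iff ENNReal.toReal_nonneg, ENNReal.ofReal_toReal hy]
    rw [this]
    exact (isClosed_le continuous_const continuous_fst).inter
      (isClosed_le (by fun_prop) (by fun_prop))

variable {T T' E : Type*}

theorem lowerSemicontinuous_Benergy [Fintype T'] [Fintype E] (M : Mesh T E) (p : T → T')
    (N : ℕ) :
    LowerSemicontinuous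
      fun x : (Fin (N+2) → T' → ℝ) × (Fin (N+1) → E → ℝ) => Benergy M p N x.1 x.2 := by
  have hnonneg : IsClosed {x : (Fin (N+2) → T' → ℝ) × (Fin (N+1) → E → ℝ) |
      ∀ k K', 0 ≤ x.1 k K'} := by
    simp only [Set.ofPred_forall]
    exact isClosed_iInter fun k => isClosed_iInter fun K' =>
      isClosed_le continuous_const (by fun_prop)
  refine LowerSemicontinuous.ite_top hnonneg (lowerSemicontinuous_sum fun k _ => ?_)
  refine (ENNReal.continuous_const_mul ENNReal.ofReal_ne_top).comp_lowerSemicontinuous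
    (lowerSemicontinuous_sum fun σ _ => ?_) mul_right_mono
  refine (ENNReal.continuous_mul_const ENNReal.ofReal_ne_top).comp_lowerSemicontinuous
    ?_ mul_left_mono
  refine lowerSemicontinuous_Bact.comp (Continuous.prodMk ?_ (by fun_prop))
  simp only [inj]
  fun_prop

theorem continuous_divT [Fintype E] [DecidableEq T] (M : Mesh T E) (K : T) :
    Continuous fun F : E → ℝ => divT M F K := by
  refine (continuous_finsetSum _ fun σ _ => ?_).div_const _
  split_ifs <;> fun_prop

theorem isClosed_Cset [Fintype E] [DecidableEq T] (M : Mesh T E) (p : T → T') (N : ℕ)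
    (ρin ρf : T' → ℝ) :
    IsClosed (Cset M p N ρin ρf) := by
  simp only [Cset, ContEq, Set.ofPred_and, Set.ofPred_forall]
  refine (isClosed_eq (by fun_prop) continuous_const).inter
    ((isClosed_eq (by fun_prop) continuous_const).inter
      (isClosed_iInter fun k => isClosed_iInter fun K => isClosed_eq ?_ continuous_const))
  exact ((by fun_prop : Continuous fun x : (Fin (N+2) → T' → ℝ) × (Fin (N+1) → E → ℝ) =>
    (x.1 k.succ (p K) - x.1 k.castSucc (p K)) / ((1:ℝ)/(N+1)))).add
    ((continuous_divT M K).comp (by fun_prop))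

theorem sum_divT_mul_m [Fintype T] [Fintype E] [DecidableEq T] (M : Mesh T E) (F : E → ℝ) :
    ∑ K, divT M F K * M.m K = 0 := by
  simp only [divT, div_mul_cancel₀ _ (M.m_pos _).ne']
  rw [Finset.sum_comm]
  refine Finset.sum_eq_zero fun σ _ => ?_
  rw [← Finset.sum_mul, Finset.sum_add_distrib]
  simp

theorem ContEq.sum_mul_m_eq [Fintype T] [Fintype E] [DecidableEq T] {M : Mesh T E}
    {p : T → T'} {N : ℕ} {ρ : Fin (N+2) → T' → ℝ} {F : Fin (N+1) → E → ℝ}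
    (h : ContEq M p N ρ F) (k : Fin (N+2)) :
    ∑ K, ρ k (p K) * M.m K = ∑ K, ρ 0 (p K) * M.m K := by
  induction k using Fin.induction with
  | zero => rfl
  | succ k ih =>
    have hstep : ∀ K, ρ k.succ (p K) * M.m K =
        ρ k.castSucc (p K) * M.m K - (1 / (N+1)) * (divT M (F k) K * M.m K) := by
      intro K
      have hK : ρ k.succ (p K) = ρ k.castSucc (p K) - 1 / (N+1) * divT M (F k) K := by
        have := h k K
        field_simp at this ⊢
        linarith
      rw [hK]
      ring
    rw [← ih, Finset.sum_congr rfl fun K _ => hstep K, Finset.sum_sub_distrib, ← Finset.mul_sum,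
      sum_divT_mul_m, mul_zero, sub_zero]

theorem le_sum_mass_div_of_mem_Cset [Fintype T] [Fintype E] [DecidableEq T] {M : Mesh T E}
    {p : T → T'} {N : ℕ} {ρin ρf : T' → ℝ} {x : (Fin (N+2) → T' → ℝ) × (Fin (N+1) → E → ℝ)}
    (hx : x ∈ Cset M p N ρin ρf) (hnn : ∀ k K', 0 ≤ x.1 k K') (k : Fin (N+2)) (K : T) :
    x.1 k (p K) ≤ ∑ L, (∑ J, ρin (p J) * M.m J) / M.m L := by
  have hmass : 0 ≤ ∑ J, ρin (p J) * M.m J :=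
    Finset.sum_nonneg fun J _ => mul_nonneg (hx.1 ▸ hnn 0 _) (M.m_pos J).le
  calc x.1 k (p K) ≤ (∑ J, ρin (p J) * M.m J) / M.m K := by
        rw [le_div_iff₀ (M.m_pos K), ← hx.1, ← hx.2.2.sum_mul_m_eq k]
        exact Finset.single_le_sum (f := fun L => x.1 k (p L) * M.m L)
          (fun L _ => mul_nonneg (hnn k _) (M.m_pos L).le) (Finset.mem_univ K)
    _ ≤ ∑ L, (∑ J, ρin (p J) * M.m J) / M.m L :=
        Finset.single_le_sum (f := fun L => (∑ J, ρin (p J) * M.m J) / M.m L)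
          (fun L _ => div_nonneg hmass (M.m_pos L).le) (Finset.mem_univ K)

theorem nonneg_of_Benergy_ne_top [Fintype T'] [Fintype E] {M : Mesh T E} {p : T → T'} {N : ℕ}
    {ρ : Fin (N+2) → T' → ℝ} {F : Fin (N+1) → E → ℝ} (h : Benergy M p N ρ F ≠ ⊤) :
    ∀ k K', 0 ≤ ρ k K' := by
  by_contra hρ
  exact h (if_neg hρ)

theorem linRec_nonneg (M : Mesh T E) {a : T → ℝ} (ha : ∀ K, 0 ≤ a K) (σ : E) :
    0 ≤ linRec M a σ :=
  add_nonneg (mul_nonneg (div_pos (M.d1_pos σ) (M.dS_pos σ)).le (ha _))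
    (mul_nonneg (div_pos (M.d2_pos σ) (M.dS_pos σ)).le (ha _))

theorem linRec_le (M : Mesh T E) {a : T → ℝ} {R : ℝ} (ha : ∀ K, a K ≤ R) (σ : E) :
    linRec M a σ ≤ R := by
  have hw : M.d1 σ / M.dS σ + M.d2 σ / M.dS σ = 1 := by
    rw [← add_div, M.d_sum, div_self (M.dS_pos σ).ne']
  calc linRec M a σ ≤ M.d1 σ / M.dS σ * R + M.d2 σ / M.dS σ * R := by
        unfold linRec
        gcongr
        · exact (div_pos (M.d1_pos σ) (M.dS_pos σ)).le
        · exact ha _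
        · exact (div_pos (M.d2_pos σ) (M.dS_pos σ)).le
        · exact ha _
    _ = R := by rw [← add_mul, hw, one_mul]

theorem Bact_mul_le_Benergy [Fintype T'] [Fintype E] (M : Mesh T E) (p : T → T') {N : ℕ}
    {ρ : Fin (N+2) → T' → ℝ} (hnn : ∀ k K', 0 ≤ ρ k K') (F : Fin (N+1) → E → ℝ)
    (k : Fin (N+1)) (σ : E) :
    ENNReal.ofReal (1 / (N+1)) *
      (Bact (linRec M (inj p fun K' => (ρ k.succ K' + ρ k.castSucc K') / 2) σ) (F k σ) *
        ENNReal.ofReal (M.mS σ * M.dS σ)) ≤ Benergy M p N ρ F := by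
  rw [Benergy, if_pos hnn]
  refine le_trans ?_ (Finset.single_le_sum (fun j _ => zero_le) (Finset.mem_univ k))
  gcongr
  exact Finset.single_le_sum (f := fun τ =>
    Bact (linRec M (inj p fun K' => (ρ k.succ K' + ρ k.castSucc K') / 2) τ) (F k τ) *
      ENNReal.ofReal (M.mS τ * M.dS τ)) (fun τ _ => zero_le) (Finset.mem_univ σ)

theorem flux_sq_mul_le [Fintype T'] [Fintype E] {M : Mesh T E} {p : T → T'} {N : ℕ}
    {ρ : Fin (N+2) → T' → ℝ} {F : Fin (N+1) → E → ℝ} {R : ℝ} (hR : ∀ k K, ρ k (p K) ≤ R)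
    {B : ℝ≥0∞} (hB : B ≠ ⊤) (hle : Benergy M p N ρ F ≤ B) (k : Fin (N+1)) (σ : E) :
    F k σ ^ 2 * (M.mS σ * M.dS σ) ≤ 2 * (N + 1) * B.toReal * R := by
  have hfin := ne_top_of_le_ne_top hB hle
  have hnn := nonneg_of_Benergy_ne_top hfin
  set a := inj p fun K' => (ρ k.succ K' + ρ k.castSucc K') / 2
  have hq0 : 0 ≤ linRec M a σ := linRec_nonneg M (fun K => by
    simp only [a, inj]; linarith [hnn k.succ (p K), hnn k.castSucc (p K)]) σ
  have hqR : linRec M a σ ≤ R :=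
    linRec_le M (fun K => by simp only [a, inj]; linarith [hR k.succ K, hR k.castSucc K]) σ
  have hsingle := Bact_mul_le_Benergy M p hnn F k σ
  have hmd : 0 < M.mS σ * M.dS σ := mul_pos (M.mS_pos σ) (M.dS_pos σ)
  have hprod := ne_top_of_le_ne_top hfin hsingle
  have hb : Bact (linRec M a σ) (F k σ) ≠ ⊤ := by
    intro htop
    rw [htop, ENNReal.top_mul (ENNReal.ofReal_pos.2 hmd).ne',
      ENNReal.mul_top (ENNReal.ofReal_pos.2 (by positivity)).ne'] at hprod
    exact hprod rfl
  have hreal : 1 / (N+1) * ((Bact (linRec M a σ) (F k σ)).toReal * (M.mS σ * M.dS σ)) ≤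
      (Benergy M p N ρ F).toReal := by
    have := ENNReal.toReal_mono hfin hsingle
    rwa [ENNReal.toReal_mul, ENNReal.toReal_mul, ENNReal.toReal_ofReal (by positivity),
      ENNReal.toReal_ofReal hmd.le] at this
  have hsq := sq_le_two_mul_toReal_Bact_mul hb
  set b := (Bact (linRec M a σ) (F k σ)).toReal
  calc F k σ ^ 2 * (M.mS σ * M.dS σ) ≤ 2 * b * linRec M a σ * (M.mS σ * M.dS σ) := by gcongr
    _ ≤ 2 * b * R * (M.mS σ * M.dS σ) := by gcongr
    _ = 2 * (N + 1) * (1 / (N+1) * (b * (M.mS σ * M.dS σ))) * R := by field_simp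
    _ ≤ 2 * (N + 1) * B.toReal * R := by
        have := hq0.trans hqR
        gcongr
        exact hreal.trans (ENNReal.toReal_mono hB hle)

open Classical in
noncomputable def piecewiseRange {ι : Type*} (p : T → T') (ρ ρ' : ι → T' → ℝ) : ι → T' → ℝ :=
  fun k K' => if K' ∈ Set.range p then ρ k K' else ρ' k K'

theorem piecewiseRange_apply_self {ι : Type*} (p : T → T') (ρ ρ' : ι → T' → ℝ) (k : ι) (K : T) :
    piecewiseRange p ρ ρ' k (p K) = ρ k (p K) :=
  if_pos (Set.mem_range_self K)

theorem piecewiseRange_nonneg {ι : Type*} (p : T → T') {ρ ρ' : ι → T' → ℝ}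
    (hρ : ∀ k K', 0 ≤ ρ k K') (hρ' : ∀ k K', 0 ≤ ρ' k K') (k : ι) (K' : T') :
    0 ≤ piecewiseRange p ρ ρ' k K' := by
  unfold piecewiseRange
  split_ifs
  exacts [hρ k K', hρ' k K']

theorem norm_piecewiseRange_le {ι : Type*} [Fintype ι] [Fintype T'] (p : T → T')
    {ρ ρ' : ι → T' → ℝ} {R : ℝ} (hR : ∀ k K, |ρ k (p K)| ≤ R) :
    ‖piecewiseRange p ρ ρ'‖ ≤ max R ‖ρ'‖ := by
  have hmax : 0 ≤ max R ‖ρ'‖ := le_max_of_le_right (norm_nonneg _)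
  refine (pi_norm_le_iff_of_nonneg hmax).2 fun k => (pi_norm_le_iff_of_nonneg hmax).2 fun K' => ?_
  unfold piecewiseRange
  split_ifs with h
  · obtain ⟨K, rfl⟩ := h
    exact le_max_of_le_left (hR k K)
  · exact le_max_of_le_right ((norm_le_pi_norm (ρ' k) K').trans (norm_le_pi_norm ρ' k))

theorem piecewiseRange_mem_Cset [Fintype E] [DecidableEq T] {M : Mesh T E} {p : T → T'}
    {N : ℕ} {ρin ρf : T' → ℝ} {x x' : (Fin (N+2) → T' → ℝ) × (Fin (N+1) → E → ℝ)}
    (hx : x ∈ Cset M p N ρin ρf) (hx' : x' ∈ Cset M p N ρin ρf) :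
    (piecewiseRange p x.1 x'.1, x.2) ∈ Cset M p N ρin ρf := by
  refine ⟨?_, ?_, fun k K => ?_⟩
  · funext K'
    simp [piecewiseRange, hx.1, hx'.1]
  · funext K'
    simp [piecewiseRange, hx.2.1, hx'.2.1]
  · simpa only [piecewiseRange_apply_self] using hx.2.2 k K

theorem Benergy_piecewiseRange [Fintype T'] [Fintype E] (M : Mesh T E) (p : T → T') (N : ℕ)
    {ρ ρ' : Fin (N+2) → T' → ℝ} (hρ : ∀ k K', 0 ≤ ρ k K') (hρ' : ∀ k K', 0 ≤ ρ' k K')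
    (F : Fin (N+1) → E → ℝ) :
    Benergy M p N (piecewiseRange p ρ ρ') F = Benergy M p N ρ F := by
  rw [Benergy, Benergy, if_pos (piecewiseRange_nonneg p hρ hρ'), if_pos hρ]
  unfold inj
  simp only [piecewiseRange_apply_self]

theorem exists_isCompact_forall_exists_le_Benergy [Fintype T] [Fintype T'] [Fintype E]
    [DecidableEq T] {M : Mesh T E} {p : T → T'} {N : ℕ} {ρin ρf : T' → ℝ}
    {x₀ : (Fin (N+2) → T' → ℝ) × (Fin (N+1) → E → ℝ)} (hx₀ : x₀ ∈ Cset M p N ρin ρf)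
    (hfin : Benergy M p N x₀.1 x₀.2 ≠ ⊤) :
    ∃ K, IsCompact K ∧ ∀ x ∈ Cset M p N ρin ρf, Benergy M p N x.1 x.2 ≤ Benergy M p N x₀.1 x₀.2 →
      ∃ y ∈ Cset M p N ρin ρf ∩ K, Benergy M p N y.1 y.2 ≤ Benergy M p N x.1 x.2 := by
  set R := ∑ L, (∑ J, ρin (p J) * M.m J) / M.m L
  set D := 2 * (N + 1) * (Benergy M p N x₀.1 x₀.2).toReal * R
  refine ⟨Metric.closedBall 0 (max R ‖x₀.1‖) ×ˢ
      Metric.closedBall 0 (∑ σ, √(D / (M.mS σ * M.dS σ))),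
    (isCompact_closedBall _ _).prod (isCompact_closedBall _ _), fun x hx hle => ?_⟩
  have hnn := nonneg_of_Benergy_ne_top (ne_top_of_le_ne_top hfin hle)
  have hR := le_sum_mass_div_of_mem_Cset hx hnn
  refine ⟨(piecewiseRange p x.1 x₀.1, x.2), ⟨piecewiseRange_mem_Cset hx hx₀, ?_, ?_⟩,
    (Benergy_piecewiseRange M p N hnn (nonneg_of_Benergy_ne_top hfin) x.2).le⟩
  · rw [mem_closedBall_zero_iff]
    exact norm_piecewiseRange_le p fun k K => (abs_of_nonneg (hnn k _)).trans_le (hR k K)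
  · rw [mem_closedBall_zero_iff]
    exact norm_le_sum_sqrt_of_forall_sq_mul_le (fun σ => mul_pos (M.mS_pos σ) (M.dS_pos σ))
      (flux_sq_mul_le hR hfin hle)

end OTFV

theorem exists_minimizer_general
    {T T' E : Type*} [Fintype T] [Fintype T'] [Fintype E] [DecidableEq T]
    (M : Mesh T E) (p : T → T') (N : ℕ) (ρin ρf : T' → ℝ)
    (xh : (Fin (N+2) → T' → ℝ) × (Fin (N+1) → E → ℝ))
    (hxh : xh ∈ Cset M p N ρin ρf) (hfin : Benergy M p N xh.1 xh.2 ≠ ⊤) :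
    ∃ x ∈ Cset M p N ρin ρf, Benergy M p N x.1 x.2 ≠ ⊤ ∧
      ∀ y ∈ Cset M p N ρin ρf, Benergy M p N x.1 x.2 ≤ Benergy M p N y.1 y.2 := by
  obtain ⟨K, hK, hretract⟩ := exists_isCompact_forall_exists_le_Benergy hxh hfin
  obtain ⟨x, hx, hmin⟩ := exists_isMinOn_of_forall_exists_le (lowerSemicontinuous_Benergy M p N)
    (isClosed_Cset M p N ρin ρf) hK hxh hretract
  exact ⟨x, hx, ne_top_of_le_ne_top hfin (hmin hxh), fun y hy => hmin hy⟩

theorem exists_minimizer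
    {T T' E : Type*} [Fintype T] [Fintype T'] [Fintype E] [DecidableEq T] [DecidableEq T']
    (M : Mesh T E) (p : T → T') (N : ℕ) (ρin ρf : T' → ℝ)
    (hin : ∀ K', 0 ≤ ρin K') (hf : ∀ K', 0 ≤ ρf K')
    (hmass : ∑ K', ρin K' * coarseM M p K' = ∑ K', ρf K' * coarseM M p K')
    (xh : (Fin (N+2) → T' → ℝ) × (Fin (N+1) → E → ℝ))
    (hxh : xh ∈ Cset M p N ρin ρf) (hfin : Benergy M p N xh.1 xh.2 ≠ ⊤) :
    ∃ x ∈ Cset M p N ρin ρf, Benergy M p N x.1 x.2 ≠ ⊤ ∧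
      ∀ y ∈ Cset M p N ρin ρf, Benergy M p N x.1 x.2 ≤ Benergy M p N y.1 y.2 :=
  exists_minimizer_general M p N ρin ρf xh hxh hfin
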